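/- If the ladder systems μ̄ and η̄ are both maximal for the same set X ⊆ ω₁, then μ̄ =* η̄, i.e., μ̄ ⊴ η̄ and η̄ ⊴ μ̄. -/

import Mathlib

open Set

/-- ω₁, the first uncountable ordinal. -/
noncomputable def omegaOne : Ordinal := (Cardinal.aleph 1).ord

/-- ω₂, the second uncountable ordinal. -/
noncomputable def omegaTwo : Ordinal := (Cardinal.aleph 2).ord

/-- The set of countable ordinals, i.e. ω₁ viewed as a set of ordinals. -/
def omegaOneSet : Set Ordinal := {o | o < omegaOne}

/-- `A ⊆* B` iff `A \ B` is finite. -/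
def AlmostSubset (A B : Set Ordinal) : Prop := (A \ B).Finite

/-- `A =* B` iff `A ⊆* B` and `B ⊆* A`. -/
def AlmostEq (A B : Set Ordinal) : Prop := AlmostSubset A B ∧ AlmostSubset B A

/-- A club subset of ω₁: a set of countable ordinals, unbounded in ω₁ and
closed (every nonzero δ < ω₁ which is a limit of members is a member). -/
def IsClubOmegaOne (C : Set Ordinal) : Prop :=
  C ⊆ omegaOneSet ∧
  (∀ a < omegaOne, ∃ b ∈ C, a < b) ∧
  (∀ δ, δ ≠ 0 → δ < omegaOne → (∀ a < δ, ∃ b ∈ C, a < b ∧ b < δ) → δ ∈ C)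

/-- A stationary subset of ω₁: one meeting every club. -/
def Stationary (S : Set Ordinal) : Prop := ∀ C, IsClubOmegaOne C → (S ∩ C).Nonempty

/-- A ladder system: for each δ in the domain (a set of countable limit ordinals),
a strictly increasing ω-sequence cofinal in δ. -/
structure Ladder where
  dom : Set Ordinal
  toFun : Ordinal → ℕ → Ordinal
  dom_lt : ∀ δ ∈ dom, δ < omegaOne
  mono : ∀ δ ∈ dom, StrictMono (toFun δ)
  lt : ∀ δ ∈ dom, ∀ n, toFun δ n < δ
  cofinal : ∀ δ ∈ dom, ∀ a < δ, ∃ n, a < toFun δ n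

/-- `[η_δ]`, the range of the ladder at δ. -/
def Ladder.lad (η : Ladder) (δ : Ordinal) : Set Ordinal := Set.range (η.toFun δ)

/-- The restriction `η̄↾A`, with domain `dom(η̄) ∩ A`. -/
def Ladder.restrict (η : Ladder) (A : Set Ordinal) : Ladder where
  dom := η.dom ∩ A
  toFun := η.toFun
  dom_lt := fun δ h => η.dom_lt δ h.1
  mono := fun δ h => η.mono δ h.1
  lt := fun δ h => η.lt δ h.1
  cofinal := fun δ h => η.cofinal δ h.1

/-- η̄ is club-guessing iff every club C has some δ ∈ dom(η̄) with `[η_δ] ⊆* C`. -/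
def ClubGuessing (η : Ladder) : Prop :=
  ∀ C, IsClubOmegaOne C → ∃ δ ∈ η.dom, AlmostSubset (η.lad δ) C

/-- η̄ is strongly club-guessing iff for every club C there is a club D with
`[η_δ] ⊆* C` for all δ ∈ D ∩ dom(η̄). -/
def StronglyGuessing (η : Ladder) : Prop :=
  ∀ C, IsClubOmegaOne C → ∃ D, IsClubOmegaOne D ∧ ∀ δ ∈ D ∩ η.dom, AlmostSubset (η.lad δ) C

/-- A club C avoids η̄ iff `[η_δ] ∩ C` is finite for every δ ∈ dom(η̄) outside
some non-stationary set. -/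
def Avoids (C : Set Ordinal) (η : Ladder) : Prop :=
  IsClubOmegaOne C ∧ ∃ N : Set Ordinal, ¬ Stationary N ∧
    ∀ δ ∈ η.dom, δ ∉ N → (η.lad δ ∩ C).Finite

/-- η̄ is avoidable iff some club avoids it. -/
def Avoidable (η : Ladder) : Prop := ∃ C, Avoids C η

/-- A set S ⊆ ω₁ is avoidable iff every ladder system over S is avoidable. -/
def AvoidableSet (S : Set Ordinal) : Prop := ∀ η : Ladder, η.dom ⊆ S → Avoidable η

/-- Two ladders are almost disjoint iff for some club C, `[η_δ] ∩ [μ_δ]` is finite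
for every δ ∈ C ∩ dom(η̄) ∩ dom(μ̄). -/
def AlmostDisjoint (η μ : Ladder) : Prop :=
  ∃ C, IsClubOmegaOne C ∧ ∀ δ ∈ C ∩ (η.dom ∩ μ.dom), (η.lad δ ∩ μ.lad δ).Finite

/-- `η̄ ⊴ μ̄` : η̄ is a subladder of μ̄. -/
def Subladder (η μ : Ladder) : Prop :=
  ∃ C, IsClubOmegaOne C ∧ C ∩ η.dom ⊆ μ.dom ∧
    ∀ δ ∈ C ∩ η.dom, AlmostSubset (η.lad δ) (μ.lad δ)

/-- η̄ is maximal for X iff dom(η̄) ⊆ X, η̄ is strongly club-guessing, and every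
ladder system over X almost disjoint from η̄ is avoidable. -/
def MaximalLadderFor (η : Ladder) (X : Set Ordinal) : Prop :=
  η.dom ⊆ X ∧ StronglyGuessing η ∧
    ∀ μ : Ladder, μ.dom ⊆ X → AlmostDisjoint μ η → Avoidable μ

/-- The diagonal union `∇_ξ A_ξ = {α < ω₁ : ∃ ξ < α, α ∈ A_ξ}`. -/
def diagUnion (A : Ordinal → Set Ordinal) : Set Ordinal :=
  {α | α < omegaOne ∧ ∃ ξ < α, α ∈ A ξ}

/-- H is S̄-small iff the set of i < ω₂ with H ∩ S_i stationary has size ≤ ℵ₁. -/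
def SSmall (S : Ordinal → Set Ordinal) (H : Set Ordinal) : Prop :=
  Cardinal.mk {i : Ordinal // i < omegaTwo ∧ Stationary (H ∩ S i)} ≤
    Cardinal.lift.{1,0} (Cardinal.aleph 1 : Cardinal.{0})

/-- Conditions A1–A5 for (S̄, η̄), with χ the family of maximal ladders from A3. -/
def CondA (S : Ordinal → Set Ordinal) (η : Ladder) (χ : Ordinal → Ladder) : Prop :=
  (∀ i < omegaTwo, S i ⊆ omegaOneSet ∧ Stationary (S i)) ∧
  (∀ i < omegaTwo, ∀ j < omegaTwo, i ≠ j → ¬ Stationary (S i ∩ S j)) ∧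
  -- A1
  (∀ i < omegaTwo, S i ⊆ η.dom) ∧
  -- A2
  (∀ μ : Ladder, AlmostDisjoint μ η → Avoidable μ) ∧
  -- A3
  (∀ i < omegaTwo, (χ i).dom = S i ∧ MaximalLadderFor (χ i) (S i)) ∧
  -- A4
  (∀ X : Set Ordinal, X ⊆ omegaOneSet →
      (∀ i < omegaTwo, ¬ Stationary (X ∩ S i)) → AvoidableSet X) ∧
  -- A5
  (∀ X : Set Ordinal, X ⊆ omegaOneSet → ¬ SSmall S X →
      ∀ ρ : Ladder, ρ.dom = X → Subladder ρ η →
        ∃ i, i < omegaTwo ∧ S i ⊆ X ∧ Subladder (χ i) ρ)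

section Aux

lemma omegaOne_isLimit : Order.IsSuccLimit omegaOne :=
  Cardinal.isSuccLimit_ord (Cardinal.aleph0_le_aleph 1)

lemma iSup_lt_omegaOne (f : ℕ → Ordinal) (hf : ∀ n, f n < omegaOne) :
    (⨆ n, f n) < omegaOne := by
  apply Ordinal.iSup_lt_ord_lift _ hf
  rw [Cardinal.mk_nat, Cardinal.lift_aleph0]
  unfold omegaOne
  rw [Cardinal.isRegular_aleph_one.cof_eq]
  exact Cardinal.aleph0_lt_aleph_one

lemma isClub_omegaOneSet : IsClubOmegaOne omegaOneSet := by
  refine ⟨fun x hx => hx, fun a ha => ⟨a + 1, ?_, ?_⟩, fun δ _ hδ _ => hδ⟩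
  · show a + 1 < omegaOne
    rw [Ordinal.add_one_eq_succ]
    exact omegaOne_isLimit.succ_lt ha
  · exact lt_of_lt_of_le (lt_add_one a) le_rfl

open Classical in
noncomputable def nextIn (C : Set Ordinal) (x : Ordinal) : Ordinal :=
  if h : ∃ b ∈ C, x < b then Classical.choose h else 0

lemma nextIn_spec {C : Set Ordinal} (hC : IsClubOmegaOne C) {x : Ordinal} (hx : x < omegaOne) :
    nextIn C x ∈ C ∧ x < nextIn C x := by
  have h : ∃ b ∈ C, x < b := hC.2.1 x hx
  rw [nextIn, dif_pos h]
  exact Classical.choose_spec h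

lemma isClub_inter {C D : Set Ordinal} (hC : IsClubOmegaOne C) (hD : IsClubOmegaOne D) :
    IsClubOmegaOne (C ∩ D) := by
  refine ⟨fun x hx => hC.1 hx.1, ?_, ?_⟩
  · intro a ha
    let f : ℕ → Ordinal := fun n =>
      Nat.rec (nextIn C a) (fun n x => if Even n then nextIn D x else nextIn C x) n
    have hstep : ∀ n, f (n + 1) = if Even n then nextIn D (f n) else nextIn C (f n) :=
      fun n => rfl
    have hprops : ∀ n, f n < omegaOne ∧ (Even n → f n ∈ C) ∧ (¬ Even n → f n ∈ D)
        ∧ f n < f (n + 1) := by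
      intro n
      induction n with
      | zero =>
        have h1 := nextIn_spec hC ha
        have hlt : f 0 < omegaOne := hC.1 h1.1
        refine ⟨hlt, fun _ => h1.1, fun h => absurd Even.zero h, ?_⟩
        rw [hstep 0, if_pos Even.zero]
        exact (nextIn_spec hD hlt).2
      | succ n ih =>
        by_cases hn : Even n
        · have hf : f (n + 1) = nextIn D (f n) := by rw [hstep n, if_pos hn]
          have hmemD : f (n + 1) ∈ D := hf ▸ (nextIn_spec hD ih.1).1
          have hlt : f (n + 1) < omegaOne := hD.1 hmemD
          have hnotev : ¬ Even (n + 1) := by simp [Nat.even_add_one, hn]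
          refine ⟨hlt, fun h => absurd h hnotev, fun _ => hmemD, ?_⟩
          rw [hstep (n + 1), if_neg hnotev]
          exact (nextIn_spec hC hlt).2
        · have hf : f (n + 1) = nextIn C (f n) := by rw [hstep n, if_neg hn]
          have hmemC : f (n + 1) ∈ C := hf ▸ (nextIn_spec hC ih.1).1
          have hlt : f (n + 1) < omegaOne := hC.1 hmemC
          have hev : Even (n + 1) := by simp [Nat.even_add_one, hn]
          refine ⟨hlt, fun _ => hmemC, fun h => absurd hev h, ?_⟩
          rw [hstep (n + 1), if_pos hev]
          exact (nextIn_spec hD hlt).2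
    have hsm : StrictMono f := strictMono_nat_of_lt_succ fun n => (hprops n).2.2.2
    have hle : ∀ n, f n ≤ ⨆ n, f n := fun n => le_ciSup (Ordinal.bddAbove_range f) n
    have hltδ : ∀ n, f n < ⨆ n, f n :=
      fun n => lt_of_lt_of_le (hprops n).2.2.2 (hle (n + 1))
    have hδlt : (⨆ n, f n) < omegaOne := iSup_lt_omegaOne f fun n => (hprops n).1
    have haδ : a < ⨆ n, f n := lt_of_lt_of_le (nextIn_spec hC ha).2 (hle 0)
    have hδne : (⨆ n, f n) ≠ 0 := (lt_of_le_of_lt (zero_le (a := a)) haδ).ne'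
    have approach : ∀ x < ⨆ n, f n, ∃ n, x < f n := by
      intro x hx
      rwa [Ordinal.lt_iSup_iff] at hx
    have hδC : (⨆ n, f n) ∈ C := by
      apply hC.2.2 _ hδne hδlt
      intro x hx
      obtain ⟨n, hn⟩ := approach x hx
      exact ⟨f (2 * n + 2), (hprops (2 * n + 2)).2.1 ⟨n + 1, by ring⟩,
        lt_of_lt_of_le hn (hsm.monotone (show n ≤ 2 * n + 2 by omega)), hltδ (2 * n + 2)⟩
    have hδD : (⨆ n, f n) ∈ D := by
      apply hD.2.2 _ hδne hδlt
      intro x hx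
      obtain ⟨n, hn⟩ := approach x hx
      exact ⟨f (2 * n + 1),
        (hprops (2 * n + 1)).2.2.1 (fun h => (Nat.even_add_one.mp h) (even_two_mul n)),
        lt_of_lt_of_le hn (hsm.monotone (show n ≤ 2 * n + 1 by omega)), hltδ (2 * n + 1)⟩
    exact ⟨⨆ n, f n, ⟨hδC, hδD⟩, haδ⟩
  · intro δ h0 hlt happ
    exact ⟨hC.2.2 δ h0 hlt fun a ha => (happ a ha).imp fun b hb => ⟨hb.1.1, hb.2⟩,
      hD.2.2 δ h0 hlt fun a ha => (happ a ha).imp fun b hb => ⟨hb.1.2, hb.2⟩⟩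

lemma exists_club_of_not_stationary {N : Set Ordinal} (h : ¬ Stationary N) :
    ∃ C, IsClubOmegaOne C ∧ ∀ x ∈ N, x ∉ C := by
  unfold Stationary at h
  push_neg at h
  obtain ⟨C, hC, hCN⟩ := h
  rw [Set.eq_empty_iff_forall_notMem] at hCN
  exact ⟨C, hC, fun x hx hxC => hCN x ⟨hx, hxC⟩⟩

lemma Ladder.lad_infinite (μ : Ladder) {δ : Ordinal} (hδ : δ ∈ μ.dom) :
    (μ.lad δ).Infinite :=
  Set.infinite_range_of_injective (μ.mono δ hδ).injective

open Classical in
/-- The ladder enumerating `[μ_δ] \ [η_δ]` (where that is infinite). -/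
noncomputable def diffLadder (μ η : Ladder) : Ladder where
  dom := {δ ∈ μ.dom | δ ∉ η.dom ∨ (μ.lad δ \ η.lad δ).Infinite}
  toFun := fun δ n =>
    if {n | μ.toFun δ n ∉ η.lad δ}.Infinite then
      μ.toFun δ (Nat.nth (fun n => μ.toFun δ n ∉ η.lad δ) n)
    else μ.toFun δ n
  dom_lt := fun δ h => μ.dom_lt δ h.1
  mono := fun δ h => by
    by_cases hinf : {n | μ.toFun δ n ∉ η.lad δ}.Infinite
    · simp only [if_pos hinf]
      exact (μ.mono δ h.1).comp (Nat.nth_strictMono hinf)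
    · simp only [if_neg hinf]
      exact μ.mono δ h.1
  lt := fun δ h n => by
    by_cases hinf : {n | μ.toFun δ n ∉ η.lad δ}.Infinite
    · simp only [if_pos hinf]; exact μ.lt δ h.1 _
    · simp only [if_neg hinf]; exact μ.lt δ h.1 _
  cofinal := fun δ h a ha => by
    obtain ⟨n, hn⟩ := μ.cofinal δ h.1 a ha
    refine ⟨n, ?_⟩
    by_cases hinf : {n | μ.toFun δ n ∉ η.lad δ}.Infinite
    · simp only [if_pos hinf]
      exact lt_of_lt_of_le hn ((μ.mono δ h.1).monotone (Nat.nth_strictMono hinf).le_apply)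
    · simp only [if_neg hinf]; exact hn

lemma diffLadder_lad_subset (μ η : Ladder) (δ : Ordinal) :
    (diffLadder μ η).lad δ ⊆ μ.lad δ := by
  rintro x ⟨n, rfl⟩
  simp only [diffLadder]
  split_ifs
  · exact ⟨_, rfl⟩
  · exact ⟨n, rfl⟩

lemma diffLadder_disjoint (μ η : Ladder) {δ : Ordinal}
    (hinf : (μ.lad δ \ η.lad δ).Infinite) :
    (diffLadder μ η).lad δ ∩ η.lad δ = ∅ := by
  have hset : {n | μ.toFun δ n ∉ η.lad δ}.Infinite := by
    apply Set.Infinite.of_image (μ.toFun δ)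
    apply hinf.mono
    rintro x ⟨⟨n, rfl⟩, hx⟩
    exact ⟨n, hx, rfl⟩
  rw [Set.eq_empty_iff_forall_notMem]
  rintro x ⟨⟨n, rfl⟩, hx⟩
  have heq : (diffLadder μ η).toFun δ n
      = μ.toFun δ (Nat.nth (fun n => μ.toFun δ n ∉ η.lad δ) n) := by
    simp only [diffLadder]
    rw [if_pos hset]
  rw [heq] at hx
  exact Nat.nth_mem_of_infinite hset n hx

lemma subladder_of_maximal (X : Set Ordinal) (μ η : Ladder)
    (hμ : MaximalLadderFor μ X) (hη : MaximalLadderFor η X) : Subladder μ η := by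
  obtain ⟨hμX, hμsg, -⟩ := hμ
  obtain ⟨-, -, hηmax⟩ := hη
  by_cases hTstat : Stationary (diffLadder μ η).dom
  · exfalso
    have hdom : (diffLadder μ η).dom ⊆ X := fun δ hδ => hμX hδ.1
    have had : AlmostDisjoint (diffLadder μ η) η := by
      refine ⟨omegaOneSet, isClub_omegaOneSet, fun δ hδ => ?_⟩
      rcases hδ.2.1.2 with h | h
      · exact absurd hδ.2.2 h
      · rw [diffLadder_disjoint μ η h]
        exact Set.finite_empty
    obtain ⟨Cav, hCav, N, hN, hNav⟩ := hηmax (diffLadder μ η) hdom had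
    obtain ⟨D, hD, hDg⟩ := hμsg Cav hCav
    obtain ⟨E, hE, hNE⟩ := exists_club_of_not_stationary hN
    obtain ⟨δ, hδT, hδDE⟩ := hTstat (D ∩ E) (isClub_inter hD hE)
    have hδN : δ ∉ N := fun hmem => hNE δ hmem hδDE.2
    have hfin1 : ((diffLadder μ η).lad δ ∩ Cav).Finite := hNav δ hδT hδN
    have hfin2 : (μ.lad δ \ Cav).Finite := hDg δ ⟨hδDE.1, hδT.1⟩
    have hsub : (diffLadder μ η).lad δ ⊆
        ((diffLadder μ η).lad δ ∩ Cav) ∪ (μ.lad δ \ Cav) := by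
      intro x hx
      by_cases hxC : x ∈ Cav
      · exact Or.inl ⟨hx, hxC⟩
      · exact Or.inr ⟨diffLadder_lad_subset μ η δ hx, hxC⟩
    exact (diffLadder μ η).lad_infinite hδT ((hfin1.union hfin2).subset hsub)
  · obtain ⟨C, hC, hTC⟩ := exists_club_of_not_stationary hTstat
    refine ⟨C, hC, ?_, ?_⟩
    · intro δ hδ
      by_contra hcon
      exact hTC δ ⟨hδ.2, Or.inl hcon⟩ hδ.1
    · intro δ hδ
      by_contra hcon
      exact hTC δ ⟨hδ.2, Or.inr hcon⟩ hδ.1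

end Aux

/-- If μ̄ and η̄ are both maximal for the same set X, then μ̄ =* η̄. -/
theorem stmt5 (X : Set Ordinal) (μ η : Ladder)
    (hμ : MaximalLadderFor μ X) (hη : MaximalLadderFor η X) :
    Subladder μ η ∧ Subladder η μ :=
  ⟨subladder_of_maximal X μ η hμ hη, subladder_of_maximal X η μ hη hμ⟩
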